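/- Let N be a Petri net with basis partition (T_E, T_I), T_I-induced subnet acyclic. A marking M ∈ ℕ^m is reachable from M_0 (M ∈ R(N, M_0)) if and only if there exists a basis marking M_b in the BRG with M ∈ R_I(M_b). -/

import Mathlib

/-- A Petri net with `m` places and `n` transitions. -/
structure PetriNet (m n : ℕ) where
  Pre : Fin m → Fin n → ℕ
  Post : Fin m → Fin n → ℕ

namespace PetriNet

variable {m n : ℕ}

/-- Incidence matrix `C = Post - Pre`. -/
def C (N : PetriNet m n) (p : Fin m) (t : Fin n) : ℤ :=
  (N.Post p t : ℤ) - (N.Pre p t : ℤ)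

/-- Transition `t` is enabled at marking `M`. -/
def enabled (N : PetriNet m n) (M : Fin m → ℕ) (t : Fin n) : Prop :=
  ∀ p, N.Pre p t ≤ M p

/-- Firing transition `t` at marking `M`. -/
def fire (N : PetriNet m n) (M : Fin m → ℕ) (t : Fin n) : Fin m → ℕ :=
  fun p => M p + N.Post p t - N.Pre p t

/-- `fires N M σ M'` : the sequence `σ` is firable at `M` and yields `M'`. -/
inductive fires (N : PetriNet m n) : (Fin m → ℕ) → List (Fin n) → (Fin m → ℕ) → Prop
  | nil (M : Fin m → ℕ) : fires N M [] M
  | cons {M M' : Fin m → ℕ} {t : Fin n} {σ : List (Fin n)} :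
      N.enabled M t → fires N (N.fire M t) σ M' → fires N M (t :: σ) M'

/-- Firing vector of a sequence. -/
def fvec (σ : List (Fin n)) : Fin n → ℕ := fun t => σ.count t

/-- Arcs of the subnet induced by transition set `TI` (full net for `TI = Set.univ`). -/
def arc (N : PetriNet m n) (TI : Set (Fin n)) :
    (Fin m ⊕ Fin n) → (Fin m ⊕ Fin n) → Prop
  | Sum.inl p, Sum.inr t => t ∈ TI ∧ 0 < N.Pre p t
  | Sum.inr t, Sum.inl p => t ∈ TI ∧ 0 < N.Post p t
  | _, _ => False

/-- The subnet induced by `TI` is acyclic: no directed cycle. -/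
def SubnetAcyclic (N : PetriNet m n) (TI : Set (Fin n)) : Prop :=
  ∀ x, ¬ Relation.TransGen (N.arc TI) x x

/-- Transitions in structural conflict. -/
def Tconf (N : PetriNet m n) : Set (Fin n) :=
  {t | ∃ p, 0 < N.Pre p t ∧ ∃ t', t' ≠ t ∧ 0 < N.Pre p t'}

/-- `TI` is non-conflicting: `TI ⊆ T \ T_conf`. -/
def NonConflicting (N : PetriNet m n) (TI : Set (Fin n)) : Prop :=
  ∀ t ∈ TI, t ∉ N.Tconf

/-- `TI` is non-increasing w.r.t. the GMEC weight vector `w`. -/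
def NonIncreasing (N : PetriNet m n) (w : Fin m → ℤ) (TI : Set (Fin n)) : Prop :=
  ∀ t ∈ TI, ∑ p, w p * N.C p t ≤ 0

/-- The `TI`-induced subnet is conflict-free: every place has at most one
output transition among `TI`. -/
def ConflictFreeSubnet (N : PetriNet m n) (TI : Set (Fin n)) : Prop :=
  ∀ p : Fin m, ∀ t ∈ TI, ∀ t' ∈ TI, 0 < N.Pre p t → 0 < N.Pre p t' → t = t'

/-- `σ` consists only of transitions in `TI`. -/
def ImplicitSeq (TI : Set (Fin n)) (σ : List (Fin n)) : Prop := ∀ t ∈ σ, t ∈ TI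

/-- Implicit reach of a marking `Mb`. -/
def RI (N : PetriNet m n) (TI : Set (Fin n)) (Mb : Fin m → ℕ) : Set (Fin m → ℕ) :=
  {M | ∃ σ, ImplicitSeq TI σ ∧ N.fires Mb σ M}

/-- Reachability set. -/
def Reach (N : PetriNet m n) (M0 : Fin m → ℕ) : Set (Fin m → ℕ) :=
  {M | ∃ σ, N.fires M0 σ M}

/-- State equation `M' = M + C·y` (the nonnegativity `M' ≥ 0` is implicit in
`M' : Fin m → ℕ`). -/
def stateEq (N : PetriNet m n) (M : Fin m → ℕ) (y : Fin n → ℕ) (M' : Fin m → ℕ) : Prop :=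
  ∀ p, (M' p : ℤ) = (M p : ℤ) + ∑ t, N.C p t * (y t : ℤ)

/-- `σ` is an explanation of `t` at `M`: an implicit sequence after which `t`
is enabled. -/
def IsExplanation (N : PetriNet m n) (TI : Set (Fin n)) (M : Fin m → ℕ)
    (t : Fin n) (σ : List (Fin n)) : Prop :=
  ImplicitSeq TI σ ∧ ∃ M', N.fires M σ M' ∧ N.enabled M' t

/-- `y` is a minimal explanation vector of `t` at `M`. -/
def MinExplVec (N : PetriNet m n) (TI : Set (Fin n)) (M : Fin m → ℕ)
    (t : Fin n) (y : Fin n → ℕ) : Prop :=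
  (∃ σ, N.IsExplanation TI M t σ ∧ fvec σ = y) ∧
    ∀ σ', N.IsExplanation TI M t σ' → ¬ fvec σ' < y

/-- `y` is the firing vector of some implicit sequence firable at `M`. -/
def FirableVec (N : PetriNet m n) (TI : Set (Fin n)) (M : Fin m → ℕ)
    (y : Fin n → ℕ) : Prop :=
  ∃ σ M', ImplicitSeq TI σ ∧ fvec σ = y ∧ N.fires M σ M'

/-- `y` is a maximal implicit firing vector at `M`. -/
def MaximalIFV (N : PetriNet m n) (TI : Set (Fin n)) (M : Fin m → ℕ)
    (y : Fin n → ℕ) : Prop :=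
  N.FirableVec TI M y ∧ ∀ y', N.FirableVec TI M y' → ¬ y < y'

/-- `y` is the maximal implicit firing vector at `M`, dominating all others. -/
def GreatestIFV (N : PetriNet m n) (TI : Set (Fin n)) (M : Fin m → ℕ)
    (y : Fin n → ℕ) : Prop :=
  N.FirableVec TI M y ∧ ∀ y', N.FirableVec TI M y' → y' ≤ y

/-- One step of the BRG: fire a minimal explanation followed by an explicit
transition `t ∉ TI`. -/
def BRGstep (N : PetriNet m n) (TI : Set (Fin n)) (M1 M2 : Fin m → ℕ) : Prop :=
  ∃ t ∉ TI, ∃ y, N.MinExplVec TI M1 t y ∧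
    ∀ p, (M2 p : ℤ) = (M1 p : ℤ) + (∑ s, N.C p s * (y s : ℤ)) + N.C p t

/-- `Mb` is a basis marking of the BRG with initial marking `M0`. -/
def Basis (N : PetriNet m n) (TI : Set (Fin n)) (M0 Mb : Fin m → ℕ) : Prop :=
  Relation.ReflTransGen (N.BRGstep TI) M0 Mb

/-- A marking is dead if it enables no transition. -/
def Dead (N : PetriNet m n) (M : Fin m → ℕ) : Prop := ∀ t, ¬ N.enabled M t

/-- Final markings of the GMEC `(w, k)`. -/
def Final (w : Fin m → ℤ) (k : ℤ) (M : Fin m → ℕ) : Prop :=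
  ∑ p, w p * (M p : ℤ) ≤ k

/-- The plant is non-blocking. -/
def NonBlocking (N : PetriNet m n) (M0 : Fin m → ℕ) (w : Fin m → ℤ) (k : ℤ) : Prop :=
  ∀ M ∈ N.Reach M0, ∃ M' ∈ N.Reach M, Final w k M'

/-- Boundedness of the marked net. -/
def Bounded (N : PetriNet m n) (M0 : Fin m → ℕ) : Prop :=
  ∃ K, ∀ M ∈ N.Reach M0, ∀ p, M p ≤ K

end PetriNet

/-!
A BRG step from `Mb` fires a minimal explanation of an explicit transition `t` and then `t`,
so basis markings are reachable. Conversely, if `M` is reached from a basis marking `Mb` by an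
implicit sequence `σ` and an explicit `t` is enabled at `M`, then `σ` explains `t`; a minimal
explanation vector `y ≤ fvec σ` gives a BRG successor `Mb'`, and `M[t⟩ = Mb' + C·(fvec σ - y)`
with an implicit residual vector. In an acyclic implicit subnet every such solution of the
state equation is realised by firing: a support transition that is minimal for the subnet's
arc order gets no tokens from the rest of the support, so the state equation already shows
it is enabled.
-/

namespace PetriNet

variable {m n : ℕ} (N : PetriNet m n)

lemma cast_fire {M : Fin m → ℕ} {t : Fin n} (h : N.enabled M t) (p : Fin m) :
    (N.fire M t p : ℤ) = M p + N.C p t := by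
  have : N.Pre p t ≤ M p + N.Post p t := (h p).trans (Nat.le_add_right _ _)
  simp only [fire, C, Nat.cast_sub this, Nat.cast_add]
  ring

lemma fvec_cons (t : Fin n) (σ : List (Fin n)) : fvec (t :: σ) = fvec σ + Pi.single t 1 := by
  funext s
  rcases eq_or_ne s t with rfl | hs
  · simp [fvec]
  · simp [fvec, hs, Ne.symm hs]

lemma sum_C_mul_add_single (p : Fin m) (y : Fin n → ℕ) (t : Fin n) :
    ∑ s, N.C p s * (((y + Pi.single t 1 : Fin n → ℕ) s : ℕ) : ℤ) =
      ∑ s, N.C p s * (y s : ℤ) + N.C p t := by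
  simp [Pi.single_apply, mul_add, Finset.sum_add_distrib]

lemma stateEq_zero_iff {M M' : Fin m → ℕ} : N.stateEq M 0 M' ↔ M' = M := by
  simp [stateEq, funext_iff]

lemma stateEq_add_single_iff {M M' : Fin m → ℕ} {y : Fin n → ℕ} {t : Fin n}
    (h : N.enabled M t) : N.stateEq M (y + Pi.single t 1) M' ↔ N.stateEq (N.fire M t) y M' := by
  refine forall_congr' fun p => ?_
  rw [sum_C_mul_add_single, cast_fire N h]
  constructor <;> intro h' <;> linarith

variable {N}

lemma stateEq.fire {M M' : Fin m → ℕ} {y : Fin n → ℕ} {t : Fin n} (h : N.stateEq M y M')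
    (ht : N.enabled M' t) : N.stateEq M (y + Pi.single t 1) (N.fire M' t) := by
  intro p
  rw [sum_C_mul_add_single, cast_fire N ht, h p]
  ring

lemma stateEq.of_add {M M' M'' : Fin m → ℕ} {y r : Fin n → ℕ} (h : N.stateEq M (y + r) M'')
    (hy : N.stateEq M y M') : N.stateEq M' r M'' := by
  intro p
  have h₁ := h p
  have h₂ := hy p
  simp only [Pi.add_apply, Nat.cast_add, mul_add, Finset.sum_add_distrib] at h₁
  linarith

lemma fires.append {M M₁ M₂ : Fin m → ℕ} {σ τ : List (Fin n)} (h₁ : N.fires M σ M₁)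
    (h₂ : N.fires M₁ τ M₂) : N.fires M (σ ++ τ) M₂ := by
  induction h₁ with
  | nil => exact h₂
  | cons he _ ih => exact fires.cons he (ih h₂)

lemma fires.stateEq {M M' : Fin m → ℕ} {σ : List (Fin n)} (h : N.fires M σ M') :
    N.stateEq M (fvec σ) M' := by
  induction h with
  | nil M => exact (stateEq_zero_iff N).2 rfl
  | cons he _ ih => rwa [fvec_cons, stateEq_add_single_iff N he]

lemma eq_fire_iff_of_fires {M₁ M₂ My : Fin m → ℕ} {σ : List (Fin n)} {t : Fin n}
    (hf : N.fires M₁ σ My) (ht : N.enabled My t) :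
    M₂ = N.fire My t ↔
      ∀ p, (M₂ p : ℤ) = M₁ p + (∑ s, N.C p s * (fvec σ s : ℤ)) + N.C p t := by
  refine funext_iff.trans (forall_congr' fun p => ?_)
  rw [← Nat.cast_inj (R := ℤ), cast_fire N ht, hf.stateEq p]

lemma BRGstep.exists_fires {TI : Set (Fin n)} {M₁ M₂ : Fin m → ℕ} (h : N.BRGstep TI M₁ M₂) :
    ∃ σ, N.fires M₁ σ M₂ := by
  obtain ⟨t, -, -, ⟨⟨σy, ⟨-, My, hfy, hey⟩, rfl⟩, -⟩, heq⟩ := h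
  obtain rfl := (eq_fire_iff_of_fires hfy hey).2 heq
  exact ⟨σy ++ [t], hfy.append (fires.cons hey (fires.nil _))⟩

lemma Basis.mem_reach {TI : Set (Fin n)} {M₀ Mb : Fin m → ℕ} (h : N.Basis TI M₀ Mb) :
    Mb ∈ N.Reach M₀ := by
  induction h with
  | refl => exact ⟨[], fires.nil M₀⟩
  | tail _ hstep ih =>
    obtain ⟨ρ, hρ⟩ := ih
    obtain ⟨σ, hσ⟩ := hstep.exists_fires
    exact ⟨ρ ++ σ, hρ.append hσ⟩

lemma exists_minExplVec_le {TI : Set (Fin n)} {M : Fin m → ℕ} {t : Fin n} {σ : List (Fin n)}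
    (h : N.IsExplanation TI M t σ) : ∃ y, N.MinExplVec TI M t y ∧ y ≤ fvec σ := by
  obtain ⟨y, ⟨⟨σy, hσy, rfl⟩, hle⟩, hmin⟩ := wellFounded_lt.has_min
    {y | (∃ σ', N.IsExplanation TI M t σ' ∧ fvec σ' = y) ∧ y ≤ fvec σ} ⟨_, ⟨σ, h, rfl⟩, le_rfl⟩
  exact ⟨_, ⟨⟨σy, hσy, rfl⟩, fun σ' hσ' hlt =>
    hmin _ ⟨⟨σ', hσ', rfl⟩, hlt.le.trans hle⟩ hlt⟩, hle⟩

lemma exists_source_of_subnetAcyclic {TI S : Set (Fin n)} (hacyc : N.SubnetAcyclic TI)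
    (hS : S ⊆ TI) (hne : S.Nonempty) :
    ∃ t ∈ S, ∀ s ∈ S, ∀ p, 0 < N.Pre p t → N.Post p s = 0 := by
  have : Std.Irrefl (Relation.TransGen (N.arc TI)) := ⟨hacyc⟩
  obtain ⟨_, ⟨t, ht, rfl⟩, hmin⟩ :=
    (Finite.wellFounded_of_trans_of_irrefl (Relation.TransGen (N.arc TI))).has_min
      (Sum.inr '' S) (hne.image _)
  refine ⟨t, ht, fun s hs p hpre => Nat.eq_zero_of_not_pos fun hpost => ?_⟩
  have hsp : N.arc TI (Sum.inr s) (Sum.inl p) := ⟨hS hs, hpost⟩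
  have hpt : N.arc TI (Sum.inl p) (Sum.inr t) := ⟨hS ht, hpre⟩
  exact hmin _ ⟨s, hs, rfl⟩ ((Relation.TransGen.single hsp).tail hpt)

lemma enabled_of_stateEq {M M' : Fin m → ℕ} {y : Fin n → ℕ} {t : Fin n}
    (h : N.stateEq M y M') (ht : 0 < y t)
    (hsrc : ∀ s, 0 < y s → ∀ p, 0 < N.Pre p t → N.Post p s = 0) : N.enabled M t := by
  intro p
  rcases Nat.eq_zero_or_pos (N.Pre p t) with hpre | hpre
  · simp [hpre]
  have hC : ∀ s, N.C p s * (y s : ℤ) = -(N.Pre p s * y s : ℤ) := fun s => by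
    rcases Nat.eq_zero_or_pos (y s) with hy | hy
    · simp [hy]
    · simp [C, hsrc s hy p hpre]
  have hle : (N.Pre p t * y t : ℤ) ≤ ∑ s, (N.Pre p s * y s : ℤ) :=
    Finset.single_le_sum (f := fun s => (N.Pre p s * y s : ℤ)) (fun _ _ => by positivity)
      (Finset.mem_univ t)
  have hM := h p
  simp only [hC, Finset.sum_neg_distrib] at hM
  have : (N.Pre p t : ℤ) ≤ N.Pre p t * y t := le_mul_of_one_le_right (by positivity) (by omega)
  omega

theorem exists_fires_of_stateEq {TI : Set (Fin n)} (hacyc : N.SubnetAcyclic TI)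
    {M M' : Fin m → ℕ} {y : Fin n → ℕ} (hy : ∀ t, 0 < y t → t ∈ TI) (h : N.stateEq M y M') :
    ∃ σ, ImplicitSeq TI σ ∧ N.fires M σ M' := by
  induction y using WellFoundedLT.induction generalizing M with | _ y ih => ?_
  by_cases hy0 : y = 0
  · subst hy0
    obtain rfl := (stateEq_zero_iff N).1 h
    exact ⟨[], by simp [ImplicitSeq], fires.nil _⟩
  obtain ⟨t, ht : 0 < y t, hsrc⟩ := exists_source_of_subnetAcyclic hacyc (S := {t | 0 < y t}) hy
    (by simpa [Set.Nonempty, Nat.pos_iff_ne_zero, funext_iff] using hy0)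
  have hen : N.enabled M t := enabled_of_stateEq h ht hsrc
  have hsplit : y = (y - Pi.single t 1) + Pi.single t 1 := by
    funext s
    rcases eq_or_ne s t with rfl | hs
    · simp only [Pi.add_apply, Pi.sub_apply, Pi.single_eq_same]; omega
    · simp [hs]
  have hlt : y - Pi.single t 1 < y :=
    Pi.lt_def.2 ⟨fun _ => tsub_le_self, t, by simp only [Pi.sub_apply, Pi.single_eq_same]; omega⟩
  rw [hsplit, stateEq_add_single_iff N hen] at h
  obtain ⟨σ, hσ, hf⟩ := ih _ hlt (fun s hs => hy s (hs.trans_le tsub_le_self)) h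
  exact ⟨t :: σ, List.forall_mem_cons.2 ⟨hy t ht, hσ⟩, fires.cons hen hf⟩

lemma exists_brg_of_mem_RI_of_enabled {TI : Set (Fin n)} (hacyc : N.SubnetAcyclic TI)
    {Mb M : Fin m → ℕ} {t : Fin n} (hM : M ∈ N.RI TI Mb) (he : N.enabled M t) :
    ∃ Mb', Relation.ReflTransGen (N.BRGstep TI) Mb Mb' ∧ N.fire M t ∈ N.RI TI Mb' := by
  obtain ⟨σ, hσ, hf⟩ := hM
  by_cases htI : t ∈ TI
  · exact ⟨Mb, .refl, σ ++ [t], List.forall_mem_append.2 ⟨hσ, by simpa using htI⟩,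
      hf.append (fires.cons he (fires.nil _))⟩
  obtain ⟨_, ⟨⟨σy, ⟨hσy, My, hfy, hey⟩, rfl⟩, hmin⟩, hle⟩ :=
    exists_minExplVec_le (⟨hσ, M, hf, he⟩ : N.IsExplanation TI Mb t σ)
  have hstep : N.BRGstep TI Mb (N.fire My t) :=
    ⟨t, htI, _, ⟨⟨σy, ⟨hσy, My, hfy, hey⟩, rfl⟩, hmin⟩, (eq_fire_iff_of_fires hfy hey).1 rfl⟩
  have hsplit : fvec σ + Pi.single t 1 = (fvec σy + Pi.single t 1) + (fvec σ - fvec σy) := by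
    funext s
    have : fvec σy s ≤ fvec σ s := hle s
    simp only [Pi.add_apply, Pi.sub_apply]
    omega
  have hres : N.stateEq (N.fire My t) (fvec σ - fvec σy) (N.fire M t) := by
    have h := hf.stateEq.fire he
    rw [hsplit] at h
    exact h.of_add (hfy.stateEq.fire hey)
  have hsupp : ∀ s, 0 < (fvec σ - fvec σy) s → s ∈ TI := fun s hs =>
    hσ s (List.count_pos_iff.1 (lt_of_lt_of_le hs tsub_le_self))
  exact ⟨_, .single hstep, exists_fires_of_stateEq hacyc hsupp hres⟩

lemma exists_basis_of_fires {TI : Set (Fin n)} (hacyc : N.SubnetAcyclic TI)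
    {M₀ Mb M M' : Fin m → ℕ} {σ : List (Fin n)} (hb : N.Basis TI M₀ Mb) (hM : M ∈ N.RI TI Mb)
    (hf : N.fires M σ M') : ∃ Mb', N.Basis TI M₀ Mb' ∧ M' ∈ N.RI TI Mb' := by
  induction hf generalizing Mb with
  | nil => exact ⟨Mb, hb, hM⟩
  | cons he _ ih =>
    obtain ⟨Mb', hbb', hM'⟩ := exists_brg_of_mem_RI_of_enabled hacyc hM he
    exact ih (hb.trans hbb') hM'

end PetriNet

open PetriNet

/-- a marking is reachable iff it lies in the implicit reach of
some basis marking of the BRG. -/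
theorem reachable_iff_in_ri_of_basis {m n : ℕ} (N : PetriNet m n)
    (TI : Set (Fin n)) (hacyc : N.SubnetAcyclic TI)
    (M0 M : Fin m → ℕ) :
    M ∈ N.Reach M0 ↔ ∃ Mb, N.Basis TI M0 Mb ∧ M ∈ N.RI TI Mb := by
  constructor
  · rintro ⟨σ, hσ⟩
    exact exists_basis_of_fires hacyc .refl ⟨[], by simp [ImplicitSeq], fires.nil M0⟩ hσ
  · rintro ⟨Mb, hb, σ, -, hσ⟩
    obtain ⟨ρ, hρ⟩ := hb.mem_reach
    exact ⟨ρ ++ σ, hρ.append hσ⟩
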